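/- arXiv:2304.09672 — 2 statements merged into one kernel-verified Lean document; each statement's English description precedes it below -/
import Mathlib

section
/- Let s ≥ 1 be an integer, c_1 < … < c_s be s distinct real numbers, and (A, b) the coefficients of the associated Runge–Kutta collocation method. Assume the method is A-stable and that the polynomial τ(π) has no root in the closed left half-plane ℂ⁻ = {z ∈ ℂ : Re(z) ≤ 0}. Then the method is Â-stable, i.e. it is A-stable, AS-stable and ASI-stable. -/
open Polynomial Matrix MeasureTheory

noncomputable section

/-- Lagrange basis function `ℓ_i(t) = ∏_{j≠i} (t - c_j)/(c_i - c_j)`. -/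
def lagrangeFun (s : ℕ) (c : Fin s → ℝ) (i : Fin s) (t : ℝ) : ℝ :=
  ∏ j ∈ Finset.univ.erase i, (t - c j) / (c i - c j)

/-- Coefficient matrix `A` of the collocation method: `a_{ij} = ∫_0^{c_i} ℓ_j`. -/
def collocA (s : ℕ) (c : Fin s → ℝ) : Matrix (Fin s) (Fin s) ℝ :=
  Matrix.of fun i j => ∫ t in (0:ℝ)..(c i), lagrangeFun s c j t

/-- Weight vector `b` of the collocation method: `b_i = ∫_0^1 ℓ_i`. -/
def collocB (s : ℕ) (c : Fin s → ℝ) : Fin s → ℝ :=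
  fun i => ∫ t in (0:ℝ)..(1:ℝ), lagrangeFun s c i t

/-- `π = ∏ (X - c_i)`. -/
def piPoly (s : ℕ) (c : Fin s → ℝ) : Polynomial ℝ :=
  ∏ i : Fin s, (Polynomial.X - Polynomial.C (c i))

/-- The linear map `τ` sending `Σ a_k X^k` to `Σ k! a_k X^k`. -/
def tauP (p : Polynomial ℝ) : Polynomial ℝ :=
  ∑ k ∈ p.support, Polynomial.C ((k.factorial : ℝ) * p.coeff k) * Polynomial.X ^ k

/-- The matrix `A` viewed as a complex matrix. -/
def collocAC (s : ℕ) (c : Fin s → ℝ) : Matrix (Fin s) (Fin s) ℂ :=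
  (collocA s c).map (fun x => (x : ℂ))

/-- The weight vector `b` viewed as a complex vector. -/
def collocBC (s : ℕ) (c : Fin s → ℝ) : Fin s → ℂ :=
  fun i => (collocB s c i : ℂ)

/-- The linear stability function `R(λ) = 1 + λ bᵀ (I - λ A)⁻¹ 𝟙`. -/
def stabR (s : ℕ) (c : Fin s → ℝ) (lam : ℂ) : ℂ :=
  1 + lam * (collocBC s c ⬝ᵥ ((1 - lam • collocAC s c)⁻¹ *ᵥ (fun _ => 1)))

/-- A-stability: `|R(λ)| ≤ 1` on the closed left half-plane (where defined). -/
def AStable (s : ℕ) (c : Fin s → ℝ) : Prop :=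
  ∀ lam : ℂ, lam.re ≤ 0 → IsUnit (1 - lam • collocAC s c).det →
    ‖stabR s c lam‖ ≤ 1

/-- I-stability: `|R(λ)| ≤ 1` on the imaginary axis (where defined). -/
def IStable (s : ℕ) (c : Fin s → ℝ) : Prop :=
  ∀ lam : ℂ, lam.re = 0 → IsUnit (1 - lam • collocAC s c).det →
    ‖stabR s c lam‖ ≤ 1

/-- AS-stability: `I - λA` invertible on `ℂ⁻` and `λ bᵀ (I - λA)⁻¹` uniformly bounded there. -/
def ASStable (s : ℕ) (c : Fin s → ℝ) : Prop :=
  (∀ lam : ℂ, lam.re ≤ 0 → IsUnit (1 - lam • collocAC s c).det) ∧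
  ∃ M : ℝ, ∀ lam : ℂ, lam.re ≤ 0 → ∀ j,
    ‖lam * (collocBC s c ᵥ* (1 - lam • collocAC s c)⁻¹) j‖ ≤ M

/-- ASI-stability: `I - λA` invertible on `ℂ⁻` and `(I - λA)⁻¹` uniformly bounded there. -/
def ASIStable (s : ℕ) (c : Fin s → ℝ) : Prop :=
  (∀ lam : ℂ, lam.re ≤ 0 → IsUnit (1 - lam • collocAC s c).det) ∧
  ∃ M : ℝ, ∀ lam : ℂ, lam.re ≤ 0 → ∀ i j,
    ‖(1 - lam • collocAC s c)⁻¹ i j‖ ≤ M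

/-- IS-stability: `I - λA` invertible on `iℝ` and `λ bᵀ (I - λA)⁻¹` uniformly bounded there. -/
def ISStable (s : ℕ) (c : Fin s → ℝ) : Prop :=
  (∀ lam : ℂ, lam.re = 0 → IsUnit (1 - lam • collocAC s c).det) ∧
  ∃ M : ℝ, ∀ lam : ℂ, lam.re = 0 → ∀ j,
    ‖lam * (collocBC s c ᵥ* (1 - lam • collocAC s c)⁻¹) j‖ ≤ M

/-- ISI-stability: `I - λA` invertible on `iℝ` and `(I - λA)⁻¹` uniformly bounded there. -/
def ISIStable (s : ℕ) (c : Fin s → ℝ) : Prop :=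
  (∀ lam : ℂ, lam.re = 0 → IsUnit (1 - lam • collocAC s c).det) ∧
  ∃ M : ℝ, ∀ lam : ℂ, lam.re = 0 → ∀ i j,
    ‖(1 - lam • collocAC s c)⁻¹ i j‖ ≤ M

end

/-!
If `μ` is an eigenvalue of `A` with eigenvector `v`, write `v` as the node values of `q'` for
a polynomial `q` of degree at most `s` with `q(0) = 0`. Exactness of collocation on polynomials
of degree `< s` turns `A v = μ v` into `q(cᵢ) = μ q'(cᵢ)`, so `q - μ q' = κ π` with `κ ≠ 0`.
The operator `∑ₖ μᵏ Dᵏ` inverts `1 - μ D` on polynomials; applying it and evaluating at `0`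
gives `κ τ(π)(μ) = 0`. Hence `μ - A`, and with it `1 - λ A`, is invertible on `ℂ⁻`. The
bounds come from compactness of the half-disc `ℂ⁻ ∩ {|z| ≤ 1}`: for `|λ| ≤ 1` directly, and
for `|λ| ≥ 1` through `λ (1 - λ A)⁻¹ = (λ⁻¹ - A)⁻¹`.
-/

open Finset

lemma Complex.inv_re_nonpos {z : ℂ} (hz : z.re ≤ 0) : z⁻¹.re ≤ 0 := by
  rw [Complex.inv_re]
  exact div_nonpos_of_nonpos_of_nonneg hz (Complex.normSq_nonneg z)

theorem norm_mul_vecMul_apply_le {m n 𝕜 : Type*} [Fintype m] [NormedCommRing 𝕜] (z : 𝕜)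
    (b : m → 𝕜) (R : Matrix m n 𝕜) (j : n) {M : ℝ} (hR : ∀ i, ‖z * R i j‖ ≤ M) :
    ‖z * (b ᵥ* R) j‖ ≤ (∑ i, ‖b i‖) * M := calc
  ‖z * (b ᵥ* R) j‖ = ‖∑ i, b i * (z * R i j)‖ := by
    simp only [vecMul, dotProduct, mul_sum]
    exact congrArg _ (sum_congr rfl fun i _ => by ring)
  _ ≤ ∑ i, ‖b i‖ * M := (norm_sum_le _ _).trans (sum_le_sum fun i _ =>
    (norm_mul_le _ _).trans (mul_le_mul_of_nonneg_left (hR i) (norm_nonneg _)))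
  _ = (∑ i, ‖b i‖) * M := (sum_mul _ _ _).symm

section Resolvent

variable {n : Type*} [Fintype n] [DecidableEq n]

attribute [local instance] Matrix.normedAddCommGroup

theorem IsCompact.exists_bound_inv_apply {X 𝕜 : Type*} [TopologicalSpace X] [NormedField 𝕜]
    {K : Set X} (hK : IsCompact K) {F : X → Matrix n n 𝕜} (hF : Continuous F)
    (hdet : ∀ x ∈ K, (F x).det ≠ 0) : ∃ M, ∀ x ∈ K, ∀ i j, ‖(F x)⁻¹ i j‖ ≤ M := by
  have hinv : ContinuousOn (fun x => (F x)⁻¹) K := by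
    intro x hx
    have hdet_inv : ContinuousAt Ring.inverse (F x).det := by
      rw [Ring.inverse_eq_inv']
      exact continuousAt_inv₀ (hdet x hx)
    exact (continuousAt_matrix_inv _ hdet_inv).comp_continuousWithinAt hF.continuousWithinAt
  obtain ⟨M, hM⟩ := hK.exists_bound_of_continuousOn hinv
  exact ⟨M, fun x hx i j => (norm_entry_le_entrywise_sup_norm _).trans (hM x hx)⟩

variable {A : Matrix n n ℂ}

omit [Fintype n] in
lemma one_sub_smul_eq_smul {z : ℂ} (hz : z ≠ 0) : 1 - z • A = z • (z⁻¹ • 1 - A) := by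
  rw [smul_sub, smul_smul, mul_inv_cancel₀ hz, one_smul]

theorem det_one_sub_smul_ne_zero (hA : ∀ μ : ℂ, μ.re ≤ 0 → (μ • 1 - A).det ≠ 0) {z : ℂ}
    (hz : z.re ≤ 0) : (1 - z • A).det ≠ 0 := by
  rcases eq_or_ne z 0 with rfl | hz0
  · simp
  · rw [one_sub_smul_eq_smul hz0, det_smul]
    exact mul_ne_zero (pow_ne_zero _ hz0) (hA _ (Complex.inv_re_nonpos hz))

lemma smul_inv_one_sub_smul {z : ℂ} (hz : z ≠ 0) (h : (z⁻¹ • 1 - A).det ≠ 0) :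
    z • (1 - z • A)⁻¹ = (z⁻¹ • 1 - A)⁻¹ := by
  have : Invertible z := invertibleOfNonzero hz
  rw [one_sub_smul_eq_smul hz, Matrix.inv_smul _ z (isUnit_iff_ne_zero.mpr h), smul_smul,
    mul_invOf_self, one_smul]

theorem exists_bound_inv_one_sub_smul (hA : ∀ μ : ℂ, μ.re ≤ 0 → (μ • 1 - A).det ≠ 0) :
    ∃ M, ∀ z : ℂ, z.re ≤ 0 → ∀ i j,
      ‖(1 - z • A)⁻¹ i j‖ ≤ M ∧ ‖z * (1 - z • A)⁻¹ i j‖ ≤ M := by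
  set K := {z : ℂ | z.re ≤ 0} ∩ Metric.closedBall 0 1
  have hK : IsCompact K :=
    (isCompact_closedBall 0 1).inter_left (isClosed_le Complex.continuous_re continuous_const)
  obtain ⟨M₁, hM₁⟩ := hK.exists_bound_inv_apply (F := fun z => 1 - z • A) (by fun_prop)
    fun z hz => det_one_sub_smul_ne_zero hA hz.1
  obtain ⟨M₂, hM₂⟩ := hK.exists_bound_inv_apply (F := fun z => z • 1 - A) (by fun_prop)
    fun z hz => hA z hz.1
  refine ⟨max M₁ M₂, fun z hz i j => ?_⟩
  rcases le_or_gt ‖z‖ 1 with hsmall | hlarge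
  · have hbound := hM₁ z ⟨hz, by simpa using hsmall⟩ i j
    rw [norm_mul]
    exact ⟨hbound.trans (le_max_left _ _),
      (mul_le_of_le_one_left (norm_nonneg _) hsmall).trans (hbound.trans (le_max_left _ _))⟩
  · have hz0 : z ≠ 0 := norm_pos_iff.mp (zero_lt_one.trans hlarge)
    have hinv_mem : z⁻¹ ∈ K :=
      ⟨Complex.inv_re_nonpos hz, by simpa using inv_le_one_of_one_le₀ hlarge.le⟩
    have hbound := hM₂ z⁻¹ hinv_mem i j
    rw [← smul_inv_one_sub_smul hz0 (hA _ hinv_mem.1), Matrix.smul_apply, smul_eq_mul,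
      norm_mul] at hbound
    rw [norm_mul]
    exact ⟨(le_mul_of_one_le_left (norm_nonneg _) hlarge.le).trans
      (hbound.trans (le_max_right _ _)), hbound.trans (le_max_right _ _)⟩

end Resolvent

theorem sum_smul_iterate_derivative_sub_smul_derivative {R : Type*} [CommRing R] (q : R[X])
    (μ : R) {N : ℕ} (hN : q.natDegree < N) :
    ∑ k ∈ range N, μ ^ k • derivative^[k] (q - μ • derivative q) = q := by
  have hterm : ∀ k, μ ^ k • derivative^[k] (q - μ • derivative q) =
      μ ^ k • derivative^[k] q - μ ^ (k + 1) • derivative^[k + 1] q := fun k => by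
    rw [iterate_derivative_sub, iterate_derivative_smul, ← Function.iterate_succ_apply, smul_sub,
      smul_smul, pow_succ]
  rw [sum_congr rfl fun k _ => hterm k, sum_range_sub' (fun k => μ ^ k • derivative^[k] q),
    iterate_derivative_eq_zero hN]
  simp

theorem aeval_tauP_eq_eval_sum_iterate_derivative (p : ℝ[X]) {N : ℕ} (hN : p.natDegree < N)
    (μ : ℂ) :
    aeval μ (tauP p) =
      (∑ k ∈ range N, μ ^ k • derivative^[k] (p.map (algebraMap ℝ ℂ))).eval 0 := by
  have htauP : tauP p = p.sum fun k a => C ((k.factorial : ℝ) * a) * X ^ k := rfl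
  rw [htauP, sum_over_range' _ (fun k => by simp) N hN, map_sum, eval_finsetSum]
  refine sum_congr rfl fun k _ => ?_
  rw [iterate_derivative_map, eval_smul, ← coeff_zero_eq_eval_zero, coeff_map,
    coeff_iterate_derivative]
  simp [mul_comm, Nat.descFactorial_self]

theorem eq_C_mul_nodal_of_eval_eq_zero {K ι : Type*} [Field K] [Fintype ι] {x : ι → K}
    (hx : Function.Injective x) {r : K[X]} (hr : r.natDegree ≤ Fintype.card ι)
    (h : ∀ i, r.eval (x i) = 0) :
    r = C (r.coeff (Fintype.card ι)) * Lagrange.nodal univ x := by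
  refine eq_of_degree_sub_lt_of_eval_index_eq univ hx.injOn ?_ fun i _ => by
    rw [h, eval_mul, Lagrange.eval_nodal_at_node (mem_univ i), mul_zero]
  have hnodal : (Lagrange.nodal univ x).natDegree = Fintype.card ι := by
    rw [Lagrange.natDegree_nodal, card_univ]
  rw [degree_lt_iff_coeff_zero, card_univ]
  intro m hm
  rw [coeff_sub, coeff_C_mul]
  rcases (show Fintype.card ι ≤ m by exact_mod_cast hm).eq_or_lt with rfl | hlt
  · rw [← hnodal, Lagrange.nodal_monic.coeff_natDegree, mul_one, sub_self]
  · rw [coeff_eq_zero_of_natDegree_lt (hr.trans_lt hlt),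
      coeff_eq_zero_of_natDegree_lt (hnodal.trans_lt hlt), mul_zero, sub_zero]

section Collocation

variable {s : ℕ} {c : Fin s → ℝ}

lemma lagrangeFun_eq_eval_basis (i : Fin s) (t : ℝ) :
    lagrangeFun s c i t = (Lagrange.basis univ c i).eval t := by
  rw [Lagrange.basis, eval_prod, lagrangeFun]
  refine prod_congr rfl fun j _ => ?_
  rw [Lagrange.basisDivisor, eval_mul, eval_C, eval_sub, eval_X, eval_C, div_eq_inv_mul]

lemma sum_pow_mul_lagrangeFun (hc : Function.Injective c) {k : ℕ} (hk : k < s) (t : ℝ) :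
    ∑ j, c j ^ k * lagrangeFun s c j t = t ^ k := by
  have hdeg : ((X : ℝ[X]) ^ k).degree < #(univ : Finset (Fin s)) := by
    rw [degree_X_pow, card_univ, Fintype.card_fin]
    exact_mod_cast hk
  have h := congrArg (eval t) (Lagrange.eq_interpolate hc.injOn hdeg)
  rw [Lagrange.interpolate_apply, eval_pow, eval_X, eval_finsetSum] at h
  simp [h, lagrangeFun_eq_eval_basis]

lemma collocA_mul_vandermonde (hc : Function.Injective c) :
    collocA s c * vandermonde c =
      of fun i k : Fin s => c i ^ ((k : ℕ) + 1) / ((k : ℕ) + 1) := by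
  ext i k
  have hint : ∀ j, IntervalIntegrable (fun t => lagrangeFun s c j t * c j ^ (k : ℕ))
      volume 0 (c i) :=
    fun j => Continuous.intervalIntegrable (by unfold lagrangeFun; fun_prop) _ _
  simp only [mul_apply, collocA, vandermonde_apply, of_apply]
  simp_rw [← intervalIntegral.integral_mul_const]
  rw [← intervalIntegral.integral_finsetSum fun j _ => hint j]
  simp_rw [mul_comm (lagrangeFun s c _ _), sum_pow_mul_lagrangeFun hc k.isLt, integral_pow]
  simp

lemma collocAC_mul_vandermonde (hc : Function.Injective c) :
    collocAC s c * vandermonde (fun j => (c j : ℂ)) =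
      of fun i k : Fin s => (c i : ℂ) ^ ((k : ℕ) + 1) / ((k : ℕ) + 1) := by
  have h := congrArg (·.map Complex.ofRealHom) (collocA_mul_vandermonde hc)
  simp only [Matrix.map_mul] at h
  convert h using 2 <;> ext <;> simp [collocAC, vandermonde_apply]

lemma piPoly_map_eq_nodal :
    (piPoly s c).map (algebraMap ℝ ℂ) = Lagrange.nodal univ fun i => (c i : ℂ) := by
  simp [piPoly, Lagrange.nodal, Polynomial.map_prod]

lemma natDegree_piPoly : (piPoly s c).natDegree = s := by
  rw [show piPoly s c = Lagrange.nodal univ c from rfl, Lagrange.natDegree_nodal, card_univ,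
    Fintype.card_fin]

theorem aeval_tauP_piPoly_eq_zero_of_eval_eq (hc : Function.Injective c) {μ : ℂ} {q : ℂ[X]}
    (hq : q ≠ 0) (hdeg : q.natDegree ≤ s) (h0 : q.eval 0 = 0)
    (hnodes : ∀ i, q.eval (c i : ℂ) = μ * (derivative q).eval (c i : ℂ)) :
    aeval μ (tauP (piPoly s c)) = 0 := by
  set π' := (piPoly s c).map (algebraMap ℝ ℂ)
  have hr_deg : (q - μ • derivative q).natDegree ≤ s := max_self s ▸
    natDegree_sub_le_of_le hdeg ((natDegree_smul_le _ _).trans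
      ((natDegree_derivative_le q).trans ((Nat.sub_le _ _).trans hdeg)))
  obtain ⟨κ, hr⟩ : ∃ κ, q - μ • derivative q = C κ * π' := by
    have h := eq_C_mul_nodal_of_eval_eq_zero (x := fun i => (c i : ℂ))
      (Complex.ofReal_injective.comp hc) (by simpa using hr_deg) fun i => by simp [hnodes]
    rw [Fintype.card_fin, ← piPoly_map_eq_nodal] at h
    exact ⟨_, h⟩
  have hq_eq : q = κ • ∑ k ∈ range (s + 1), μ ^ k • derivative^[k] π' := by
    rw [← sum_smul_iterate_derivative_sub_smul_derivative q μ (Nat.lt_add_one_of_le hdeg), hr,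
      smul_sum]
    simp_rw [← smul_eq_C_mul, iterate_derivative_smul, smul_comm κ]
  have hκ : κ ≠ 0 := by
    rintro rfl
    exact hq (by simpa using hq_eq)
  have heval := congrArg (eval 0) hq_eq
  rw [h0, eval_smul, ← aeval_tauP_eq_eval_sum_iterate_derivative _
    (by rw [natDegree_piPoly]; omega), smul_eq_mul] at heval
  exact (mul_eq_zero.mp heval.symm).resolve_left hκ

theorem aeval_tauP_piPoly_eq_zero_of_det_eq_zero (hc : Function.Injective c) {μ : ℂ}
    (h : (μ • 1 - collocAC s c).det = 0) : aeval μ (tauP (piPoly s c)) = 0 := by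
  obtain ⟨v, hv0, hv⟩ := exists_mulVec_eq_zero_iff.mpr h
  have hAv : collocAC s c *ᵥ v = μ • v := by
    rw [sub_mulVec, smul_mulVec, one_mulVec, sub_eq_zero] at hv
    exact hv.symm
  set V := vandermonde fun j => (c j : ℂ)
  have hV : IsUnit V.det :=
    isUnit_iff_ne_zero.mpr (det_vandermonde_ne_zero_iff.mpr (Complex.ofReal_injective.comp hc))
  obtain ⟨a, hVa⟩ : ∃ a, V *ᵥ a = v :=
    ⟨V⁻¹ *ᵥ v, by rw [mulVec_mulVec, mul_nonsing_inv _ hV, one_mulVec]⟩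
  set q : ℂ[X] := ∑ k : Fin s, C (a k / ((k : ℕ) + 1)) * X ^ ((k : ℕ) + 1)
  have hq' : derivative q = ∑ k : Fin s, C (a k) * X ^ (k : ℕ) := by
    simp only [q, derivative_sum, derivative_C_mul_X_pow]
    refine sum_congr rfl fun k _ => ?_
    rw [Nat.add_sub_cancel, Nat.cast_add_one, div_mul_cancel₀ _ (Nat.cast_add_one_ne_zero _)]
  have hq'_eval : ∀ j, (derivative q).eval (c j : ℂ) = v j := fun j => by
    rw [hq', ← hVa]
    simp only [eval_finsetSum, eval_mul, eval_C, eval_pow, eval_X, mulVec, dotProduct, V,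
      vandermonde_apply]
    exact sum_congr rfl fun k _ => mul_comm _ _
  have hq_eval : ∀ i, q.eval (c i : ℂ) = μ * v i := fun i => calc
    q.eval (c i : ℂ) = ((collocAC s c * V) *ᵥ a) i := by
      simp only [q, V, collocAC_mul_vandermonde hc, eval_finsetSum, eval_mul, eval_C, eval_pow,
        eval_X, mulVec, dotProduct, of_apply]
      exact sum_congr rfl fun k _ => by ring
    _ = μ * v i := by rw [← mulVec_mulVec, hVa, hAv]; rfl
  refine aeval_tauP_piPoly_eq_zero_of_eval_eq hc (q := q) ?_ ?_ ?_ fun i => by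
    rw [hq_eval, hq'_eval]
  · rintro hq
    exact hv0 (funext fun j => by rw [← hq'_eval, hq]; simp)
  · refine natDegree_sum_le_of_forall_le _ _ fun k _ => ?_
    exact (natDegree_C_mul_X_pow_le _ _).trans k.isLt
  · simp [q, eval_finsetSum]

end Collocation

theorem AStable_of_no_root_hatA_general (s : ℕ) (c : Fin s → ℝ) (hc : StrictMono c)
    (hA : AStable s c)
    (hroot : ∀ z : ℂ, z.re ≤ 0 → Polynomial.aeval z (tauP (piPoly s c)) ≠ 0) :
    AStable s c ∧ ASStable s c ∧ ASIStable s c := by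
  have hdet : ∀ μ : ℂ, μ.re ≤ 0 → (μ • 1 - collocAC s c).det ≠ 0 := fun μ hμ h =>
    hroot μ hμ (aeval_tauP_piPoly_eq_zero_of_det_eq_zero hc.injective h)
  have hunit : ∀ z : ℂ, z.re ≤ 0 → IsUnit (1 - z • collocAC s c).det := fun z hz =>
    isUnit_iff_ne_zero.mpr (det_one_sub_smul_ne_zero hdet hz)
  obtain ⟨M, hM⟩ := exists_bound_inv_one_sub_smul hdet
  exact ⟨hA,
    ⟨hunit, _, fun z hz j => norm_mul_vecMul_apply_le _ _ _ _ fun i => (hM z hz i j).2⟩,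
    ⟨hunit, M, fun z hz i j => (hM z hz i j).1⟩⟩

/-- an `A`-stable collocation method such that `τ(π)` has no root in `ℂ⁻`
is `Â`-stable (i.e. `A`-, `AS`- and `ASI`-stable). -/
theorem AStable_of_no_root_hatA (s : ℕ) (hs : 1 ≤ s) (c : Fin s → ℝ) (hc : StrictMono c)
    (hA : AStable s c)
    (hroot : ∀ z : ℂ, z.re ≤ 0 → Polynomial.aeval z (tauP (piPoly s c)) ≠ 0) :
    AStable s c ∧ ASStable s c ∧ ASIStable s c :=
  AStable_of_no_root_hatA_general s c hc hA hroot
end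

section
/- Let s ≥ 1 be an integer and c_1 < … < c_s be s distinct real numbers symmetric with respect to 1/2 (c_i + c_{s+1−i} = 1 for all i), and let (A, b) be the coefficients of the associated Runge–Kutta collocation method with linear stability function R. Then: (i) limsup of |R(λ)| as |λ| → +∞ (over λ at which R is defined) is at most 1; and (ii) for every purely imaginary λ at which I − λA is invertible, |R(λ)| = 1. -/
open Polynomial Matrix MeasureTheory

/-!
Symmetry of the nodes gives `ℓ_{rev i}(t) = ℓ_i(1 - t)`, hence `P A P = 𝟙 bᵀ - A` for the
reversal permutation `P`. So `P (I + λA) P` is the rank-one update `I - λA + λ 𝟙 bᵀ`, and the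
matrix determinant lemma gives `R(λ) = q(-λ) / q(λ)` with `q(λ) = det (I - λA)`. At infinity
`q(-λ) ~ (-1)^(deg q) q(λ)`, so `|R(λ)| → 1`; on the imaginary axis `-λ = conj λ` and `q` has
real coefficients, so `|q(-λ)| = |q(λ)|`.
-/

open Filter Bornology Asymptotics Topology ComplexConjugate

theorem Polynomial.tendsto_norm_eval_neg_div_eval_cobounded {𝕜 : Type*} [NormedField 𝕜]
    {P : 𝕜[X]} (hP : P ≠ 0) :
    Tendsto (fun z => ‖P.eval (-z) / P.eval z‖) (cobounded 𝕜) (𝓝 1) := by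
  have hlead := isEquivalent_cobounded_leading_monomial (P := P)
  have hratio := (hlead.comp_tendsto tendsto_neg_cobounded).div hlead
  have hsign : Tendsto (fun z : 𝕜 => P.leadingCoeff * (-z) ^ P.natDegree /
      (P.leadingCoeff * z ^ P.natDegree)) (cobounded 𝕜) (𝓝 ((-1) ^ P.natDegree)) := by
    refine tendsto_const_nhds.congr' ?_
    filter_upwards [eventually_ne_cobounded 0] with z hz
    have hlc := leadingCoeff_ne_zero.mpr hP
    rw [neg_pow z]
    field_simp
  simpa using (hratio.symm.tendsto_nhds hsign).norm

theorem Matrix.eval_charpolyRev_eq_det {ι R : Type*} [Fintype ι] [DecidableEq ι] [CommRing R]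
    (M : Matrix ι ι R) (z : R) : M.charpolyRev.eval z = (1 - z • M).det := by
  rw [charpolyRev, ← coe_evalRingHom, RingHom.map_det]
  congr 1
  ext i j
  by_cases h : i = j <;> simp [h, mul_comm z]

theorem Matrix.det_one_sub_conj_smul_map_ofReal {ι : Type*} [Fintype ι] [DecidableEq ι]
    (A : Matrix ι ι ℝ) (z : ℂ) :
    (1 - conj z • A.map ((↑) : ℝ → ℂ)).det = conj (1 - z • A.map ((↑) : ℝ → ℂ)).det := by
  rw [RingHom.map_det]
  congr 1
  ext i j
  by_cases h : i = j <;> simp [h]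

theorem Matrix.det_one_add_smul_eq_det_one_sub_smul_mul {ι K : Type*} [Fintype ι]
    [DecidableEq ι] [Field K] (e : Equiv.Perm ι) {A : Matrix ι ι K} {b : ι → K}
    (hA : ∀ i j, A (e i) (e j) = b j - A i j) {z : K} (hz : IsUnit (1 - z • A).det) :
    (1 + z • A).det = (1 - z • A).det * (1 + z * (b ⬝ᵥ ((1 - z • A)⁻¹ *ᵥ fun _ => 1))) := by
  have hperm : (1 + z • A).submatrix e e =
      1 - z • A + replicateCol Unit (fun _ => z) * replicateRow Unit b := by
    ext i j
    simp only [submatrix_apply, add_apply, one_apply, EmbeddingLike.apply_eq_iff_eq, smul_apply,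
      hA, smul_eq_mul, sub_apply, mul_apply, Finset.univ_unique, PUnit.default_eq_unit,
      replicateCol_apply, replicateRow_apply, Finset.sum_const, Finset.card_singleton, one_smul]
    ring
  rw [← det_submatrix_equiv_self e, hperm, det_add_replicateCol_mul_replicateRow hz,
    det_unique (n := Unit), Matrix.mul_assoc, ← replicateCol_mulVec, add_apply, one_apply_eq,
    replicateRow_mul_replicateCol_apply, show (fun _ => z) = z • fun _ : ι => (1 : K) by ext; simp,
    mulVec_smul, dotProduct_smul, smul_eq_mul]

theorem lagrangeFun_rev {s : ℕ} {c : Fin s → ℝ} (hsym : ∀ i : Fin s, c i + c i.rev = 1)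
    (i : Fin s) (t : ℝ) : lagrangeFun s c i.rev t = lagrangeFun s c i (1 - t) := by
  refine Finset.prod_equiv Fin.revPerm (by simp [Fin.rev_eq_iff]) fun j _ => ?_
  rw [Fin.revPerm_apply, show 1 - t - c j.rev = -(t - c j) by linarith [hsym j],
    show c i - c j.rev = -(c i.rev - c j) by linarith [hsym i, hsym j], neg_div_neg_eq]

theorem continuous_lagrangeFun (s : ℕ) (c : Fin s → ℝ) (i : Fin s) :
    Continuous (lagrangeFun s c i) := by
  unfold lagrangeFun
  fun_prop

theorem collocA_rev {s : ℕ} {c : Fin s → ℝ} (hsym : ∀ i : Fin s, c i + c i.rev = 1)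
    (i j : Fin s) : collocA s c i.rev j.rev = collocB s c j - collocA s c i j := by
  have hint := (continuous_lagrangeFun s c j).intervalIntegrable (μ := volume)
  simp only [collocA, collocB, Matrix.of_apply, lagrangeFun_rev hsym,
    intervalIntegral.integral_comp_sub_left (lagrangeFun s c j) 1,
    intervalIntegral.integral_interval_sub_left (hint 0 1) (hint 0 (c i))]
  rw [show 1 - c i.rev = c i by linarith [hsym i], sub_zero]

theorem collocAC_rev {s : ℕ} {c : Fin s → ℝ} (hsym : ∀ i : Fin s, c i + c i.rev = 1)
    (i j : Fin s) : collocAC s c i.rev j.rev = collocBC s c j - collocAC s c i j := by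
  simp [collocAC, collocBC, collocA_rev hsym]

theorem stabR_eq_det_div {s : ℕ} {c : Fin s → ℝ} (hsym : ∀ i : Fin s, c i + c i.rev = 1)
    {lam : ℂ} (h : IsUnit (1 - lam • collocAC s c).det) :
    stabR s c lam = (1 + lam • collocAC s c).det / (1 - lam • collocAC s c).det := by
  rw [det_one_add_smul_eq_det_one_sub_smul_mul Fin.revPerm (collocAC_rev hsym) h,
    mul_div_cancel_left₀ _ h.ne_zero, stabR]

theorem stabR_symmetric_bounds_general (s : ℕ) (c : Fin s → ℝ)
    (hsym : ∀ i : Fin s, c i + c i.rev = 1) :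
    (∀ ε : ℝ, 0 < ε → ∃ M : ℝ, ∀ lam : ℂ, M ≤ ‖lam‖ →
      IsUnit (1 - lam • collocAC s c).det → ‖stabR s c lam‖ ≤ 1 + ε) ∧
    (∀ lam : ℂ, lam.re = 0 → IsUnit (1 - lam • collocAC s c).det →
      ‖stabR s c lam‖ = 1) := by
  refine ⟨fun ε hε => ?_, fun lam hre h => ?_⟩
  · have hq : (collocAC s c).charpolyRev ≠ 0 := fun h0 => by
      simpa [h0] using eval_charpolyRev (M := collocAC s c)
    obtain ⟨M, -, hM⟩ := hasBasis_cobounded_norm.eventually_iff.mp <|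
      (tendsto_norm_eval_neg_div_eval_cobounded hq).eventually
        (eventually_le_nhds (lt_add_of_pos_right 1 hε))
    refine ⟨M, fun lam hlam h => ?_⟩
    simpa [stabR_eq_det_div hsym h, eval_charpolyRev_eq_det] using hM hlam
  · have hconj : -lam = conj lam := Complex.ext (by simp [hre]) (by simp)
    rw [stabR_eq_det_div hsym h, norm_div, ← sub_neg_eq_add, ← neg_smul, hconj, collocAC,
      det_one_sub_conj_smul_map_ofReal, Complex.norm_conj]
    exact div_self (norm_ne_zero_iff.mpr h.ne_zero)

/-- for symmetric collocation points, `limsup_{|λ|→∞} |R(λ)| ≤ 1` and `|R(λ)| = 1`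
on the imaginary axis (where `I - λA` is invertible). -/
theorem stabR_symmetric_bounds (s : ℕ) (hs : 1 ≤ s) (c : Fin s → ℝ) (hc : StrictMono c)
    (hsym : ∀ i : Fin s, c i + c i.rev = 1) :
    (∀ ε : ℝ, 0 < ε → ∃ M : ℝ, ∀ lam : ℂ, M ≤ ‖lam‖ →
      IsUnit (1 - lam • collocAC s c).det → ‖stabR s c lam‖ ≤ 1 + ε) ∧
    (∀ lam : ℂ, lam.re = 0 → IsUnit (1 - lam • collocAC s c).det →
      ‖stabR s c lam‖ = 1) :=
  stabR_symmetric_bounds_general s c hsym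
end
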